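/- arXiv:1207.0701 — 7 statements merged into one kernel-verified Lean document; each statement's English description precedes it below -/
import Mathlib

section
/- Let p, q, r be real numbers with 0 ≤ p, 1 ≤ q, 0 ≤ r and p + r ≤ (1 + r)·q. Then for every real x with 0 < x, one has x^((1 + r - (p+r)/q)/2) · (x^p - 1) · (x^((p+r)/q) - 1) ≤ (p/q) · (x^(p+r) - 1) · (x - 1). -/
/-!
Write `x = exp (2 * u)`, so that `x ^ a - 1 = 2 * exp (a * u) * sinh (a * u)`. The exponential
factors on the two sides then agree, and with `s = (p + r) / q` and `p / q = p * s / (p + r)`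
the inequality becomes `φ (p * u) + φ (s * u) ≤ φ ((p + r) * u) + φ u` for
`φ y = log (sinh y / y)`. This function is increasing and convex on `(0, ∞)`, and the hypotheses
say that `(p, s)` is weakly submajorized by `(p + r, 1)`.
-/

open Real Set

theorem ConvexOn.map_add_map_le_of_add_eq {s : Set ℝ} {f : ℝ → ℝ} (hf : ConvexOn ℝ s f)
    {a b c d : ℝ} (hc : c ∈ s) (hd : d ∈ s) (hda : d ≤ a) (hac : a ≤ c) (habcd : a + b = c + d) :
    f a + f b ≤ f c + f d := by
  rcases (hda.trans hac).eq_or_lt with hdc | hdc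
  · obtain rfl : a = c := by linarith
    obtain rfl : b = d := by linarith
    rw [add_comm]
  set θ := (a - d) / (c - d)
  have hθ₀ : 0 ≤ θ := div_nonneg (by linarith) (by linarith)
  have hθ₁ : 0 ≤ 1 - θ := sub_nonneg.2 (div_le_one_of_le₀ (by linarith) (by linarith))
  have ha : (1 - θ) • d + θ • c = a := by simp only [smul_eq_mul, θ]; field_simp; ring
  have hb : θ • d + (1 - θ) • c = b := by
    simp only [smul_eq_mul, θ]; field_simp; linear_combination (d - c) * habcd
  have h₁ := hf.2 hd hc hθ₁ hθ₀ (by ring)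
  have h₂ := hf.2 hd hc hθ₀ hθ₁ (by ring)
  rw [ha] at h₁
  rw [hb] at h₂
  simp only [smul_eq_mul] at h₁ h₂
  linarith

theorem ConvexOn.map_add_map_le_of_le_of_add_le {s : Set ℝ} {f : ℝ → ℝ} (hf : ConvexOn ℝ s f)
    (hmono : MonotoneOn f s) {a b c d : ℝ} (ha : a ∈ s) (hb : b ∈ s) (hc : c ∈ s) (hd : d ∈ s)
    (hac : a ≤ c) (hbc : b ≤ c) (habcd : a + b ≤ c + d) : f a + f b ≤ f c + f d := by
  rcases le_or_gt a d with had | hda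
  · linarith [hmono ha hd had, hmono hb hc hbc]
  have hb' : c + d - a ∈ s := hf.1.ordConnected.out hd hc ⟨by linarith, by linarith⟩
  linarith [hmono hb hb' (by linarith),
    hf.map_add_map_le_of_add_eq hc hd hda.le hac (b := c + d - a) (by ring)]

theorem Real.sinh_le_mul_cosh {y : ℝ} (hy : 0 ≤ y) : sinh y ≤ y * cosh y := by
  rcases hy.eq_or_lt with rfl | hy
  · simp
  obtain ⟨ξ, hξ, hslope⟩ := exists_hasDerivAt_eq_slope sinh cosh hy continuous_sinh.continuousOn
    fun t _ => hasDerivAt_sinh t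
  rw [sinh_zero, sub_zero, sub_zero, eq_div_iff hy.ne'] at hslope
  rw [← hslope, mul_comm]
  gcongr
  rw [cosh_le_cosh, abs_of_pos hξ.1, abs_of_pos hy]
  exact hξ.2.le

theorem Real.hasDerivAt_log_sinh_sub_log {y : ℝ} (hy : 0 < y) :
    HasDerivAt (fun y => log (sinh y) - log y) (cosh y / sinh y - y⁻¹) y :=
  ((hasDerivAt_sinh y).log (sinh_pos_iff.2 hy).ne').sub (hasDerivAt_log hy.ne')

theorem Real.hasDerivAt_cosh_div_sinh_sub_inv {y : ℝ} (hy : 0 < y) :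
    HasDerivAt (fun y => cosh y / sinh y - y⁻¹) ((y ^ 2)⁻¹ - (sinh y ^ 2)⁻¹) y := by
  have hsinh := (sinh_pos_iff.2 hy).ne'
  refine (((hasDerivAt_cosh y).div (hasDerivAt_sinh y) hsinh).sub
    (hasDerivAt_inv hy.ne')).congr_deriv ?_
  field_simp
  linear_combination (-y ^ 2) * cosh_sq_sub_sinh_sq y

theorem Real.monotoneOn_log_sinh_sub_log : MonotoneOn (fun y => log (sinh y) - log y) (Ioi 0) := by
  refine monotoneOn_of_hasDerivWithinAt_nonneg (convex_Ioi 0) (f' := fun y => cosh y / sinh y - y⁻¹)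
    (fun y hy => (hasDerivAt_log_sinh_sub_log hy).continuousAt.continuousWithinAt)
    (fun y hy => ?_) fun y hy => ?_
  all_goals rw [interior_Ioi] at hy
  · exact (hasDerivAt_log_sinh_sub_log hy).hasDerivWithinAt
  · have hsinh : 0 < sinh y := sinh_pos_iff.2 hy
    rw [sub_nonneg, inv_le_iff_one_le_mul₀ hy, div_mul_eq_mul_div, le_div_iff₀ hsinh, one_mul,
      mul_comm]
    exact sinh_le_mul_cosh hy.le

theorem Real.convexOn_log_sinh_sub_log : ConvexOn ℝ (Ioi 0) (fun y => log (sinh y) - log y) := by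
  refine convexOn_of_hasDerivWithinAt2_nonneg (convex_Ioi 0) (f' := fun y => cosh y / sinh y - y⁻¹)
    (f'' := fun y => (y ^ 2)⁻¹ - (sinh y ^ 2)⁻¹)
    (fun y hy => (hasDerivAt_log_sinh_sub_log hy).continuousAt.continuousWithinAt)
    (fun y hy => ?_) (fun y hy => ?_) fun y hy => ?_
  all_goals rw [interior_Ioi] at hy
  · exact (hasDerivAt_log_sinh_sub_log hy).hasDerivWithinAt
  · exact (hasDerivAt_cosh_div_sinh_sub_inv hy).hasDerivWithinAt
  · exact sub_nonneg.2 <| inv_anti₀ (pow_pos hy 2) <|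
      pow_le_pow_left₀ hy.le (self_le_sinh_iff.2 hy.le) 2

theorem Real.sinh_mul_sinh_div_le {a b c d : ℝ} (ha : 0 < a) (hb : 0 < b) (hd : 0 < d)
    (hac : a ≤ c) (hbc : b ≤ c) (habcd : a + b ≤ c + d) :
    sinh a * sinh b / (a * b) ≤ sinh c * sinh d / (c * d) := by
  have hc : 0 < c := ha.trans_le hac
  have key := convexOn_log_sinh_sub_log.map_add_map_le_of_le_of_add_le
    monotoneOn_log_sinh_sub_log ha hb hc hd hac hbc habcd
  have := (sinh_pos_iff.2 ha).ne'
  have := (sinh_pos_iff.2 hb).ne'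
  have := (sinh_pos_iff.2 hc).ne'
  have := (sinh_pos_iff.2 hd).ne'
  rw [← log_le_log_iff (by positivity) (by positivity), log_div (by positivity) (by positivity),
    log_div (by positivity) (by positivity), log_mul (by positivity) (by positivity),
    log_mul (by positivity) (by positivity), log_mul (by positivity) (by positivity),
    log_mul (by positivity) (by positivity)]
  linarith

theorem Real.sinh_mul_sinh_le {p q r : ℝ} (hp : 0 ≤ p) (hq : 1 ≤ q) (hr : 0 ≤ r)
    (hpqr : p + r ≤ (1 + r) * q) (u : ℝ) :
    sinh (p * u) * sinh ((p + r) / q * u) ≤ p / q * (sinh ((p + r) * u) * sinh u) := by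
  wlog hu : 0 < u generalizing u
  · rcases (not_lt.1 hu).eq_or_lt with rfl | hu
    · simp
    simpa only [mul_neg, sinh_neg, neg_mul, neg_neg] using this (-u) (neg_pos.2 hu)
  rcases hp.eq_or_lt with rfl | hp
  · simp
  have hs : (p + r) / q ≤ p + r := div_le_self (by positivity) hq
  have hs' : (p + r) / q ≤ 1 + r := (div_le_iff₀ (one_pos.trans_le hq)).2 hpqr
  have key := sinh_mul_sinh_div_le (a := p * u) (b := (p + r) / q * u) (c := (p + r) * u) (d := u)
    (by positivity) (by positivity) hu (by nlinarith) (by nlinarith) (by nlinarith)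
  rw [div_le_div_iff₀ (by positivity) (by positivity)] at key
  refine le_of_mul_le_mul_right ?_ (by positivity : 0 < (p + r) * u * u)
  linear_combination key

theorem Real.exp_two_mul_rpow_sub_one (u a : ℝ) :
    exp (2 * u) ^ a - 1 = 2 * exp (a * u) * sinh (a * u) := by
  have h₁ : exp (2 * u * a) = exp (a * u) * exp (a * u) := by rw [← exp_add]; ring_nf
  have h₂ : exp (a * u) * exp (-(a * u)) = 1 := by rw [← exp_add, add_neg_cancel, exp_zero]
  rw [← exp_mul, sinh_eq]
  linear_combination h₁ + h₂

theorem stmt_0 (p q r : ℝ) (hp : 0 ≤ p) (hq : 1 ≤ q) (hr : 0 ≤ r)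
    (hpqr : p + r ≤ (1 + r) * q) (x : ℝ) (hx : 0 < x) :
    x ^ ((1 + r - (p + r) / q) / 2) * (x ^ p - 1) * (x ^ ((p + r) / q) - 1) ≤
      p / q * (x ^ (p + r) - 1) * (x - 1) := by
  obtain ⟨u, rfl⟩ : ∃ u, x = exp (2 * u) :=
    ⟨log x / 2, by rw [mul_div_cancel₀ _ two_ne_zero, exp_log hx]⟩
  have hx₁ : exp (2 * u) - 1 = 2 * exp u * sinh u := by
    simpa using exp_two_mul_rpow_sub_one u 1
  have hweight : exp (2 * u) ^ ((1 + r - (p + r) / q) / 2) = exp ((1 + r - (p + r) / q) * u) := by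
    rw [← exp_mul]; ring_nf
  have hexp : exp ((1 + r - (p + r) / q) * u) * exp (p * u) * exp ((p + r) / q * u) =
      exp ((p + r) * u) * exp u := by
    simp only [← exp_add]; ring_nf
  rw [hweight, exp_two_mul_rpow_sub_one, exp_two_mul_rpow_sub_one, exp_two_mul_rpow_sub_one, hx₁]
  calc _ = 4 * (exp ((1 + r - (p + r) / q) * u) * exp (p * u) * exp ((p + r) / q * u)) *
        (sinh (p * u) * sinh ((p + r) / q * u)) := by ring
    _ ≤ 4 * (exp ((p + r) * u) * exp u) * (p / q * (sinh ((p + r) * u) * sinh u)) := by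
      rw [hexp]
      exact mul_le_mul_of_nonneg_left (sinh_mul_sinh_le hp hq hr hpqr u) (by positivity)
    _ = _ := by ring
end

section
/- Let p, r be real numbers with 1 ≤ p and 0 ≤ r. Then for every real x with 0 < x, one has (p + r)·(x^p - 1)·(x^(1+r) - 1) ≤ p·(1 + r)·(x - 1)·(x^(p+r) - 1). -/
/-!
With `l = log x` one has `x ^ t - 1 = l t E(l t)`, where `E(c) = ∫₀¹ exp (c u) du`, so the
inequality reduces to `E(l p) E(l (1 + r)) ≤ E(l) E(l (p + r))`. Symmetrizing the double integral,
`2 E(a) E(b) = ∫∫ (exp (a u + b v) + exp (b u + a v))`, and the integrand equals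
`2 exp ((a + b)(u + v) / 2) cosh ((a - b)(u - v) / 2)`: for fixed `a + b` it grows with `|a - b|`.
-/

open Real intervalIntegral

-- `(exp c - 1) / c`, written so that there is no singularity at `c = 0`.
noncomputable def expAvg (c : ℝ) : ℝ := ∫ u in (0:ℝ)..1, exp (c * u)

lemma exp_sub_one_eq_mul_expAvg (c : ℝ) : exp c - 1 = c * expAvg c := by
  rcases eq_or_ne c 0 with rfl | hc
  · simp
  · rw [expAvg, integral_comp_mul_left exp hc, integral_exp]
    simp [hc]

lemma exp_add_exp_eq_mul_cosh (x y : ℝ) :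
    exp x + exp y = 2 * exp ((x + y) / 2) * cosh ((x - y) / 2) := by
  rw [cosh_eq, mul_comm 2, mul_assoc, mul_div_cancel₀ _ two_ne_zero, mul_add, ← exp_add,
    ← exp_add]
  ring_nf

lemma exp_add_exp_le_of_abs_sub_le {a b c d : ℝ} (hsum : a + b = c + d)
    (habs : |a - b| ≤ |c - d|) (u v : ℝ) :
    exp (a * u + b * v) + exp (b * u + a * v) ≤ exp (c * u + d * v) + exp (d * u + c * v) := by
  have hmid : (a * u + b * v + (b * u + a * v)) / 2 = (c * u + d * v + (d * u + c * v)) / 2 := by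
    linear_combination (u + v) / 2 * hsum
  have hdiff : ∀ s t : ℝ, (s * u + t * v - (t * u + s * v)) / 2 = (s - t) * ((u - v) / 2) :=
    fun s t => by ring
  rw [exp_add_exp_eq_mul_cosh, exp_add_exp_eq_mul_cosh, hmid, hdiff, hdiff]
  gcongr
  rw [cosh_le_cosh, abs_mul, abs_mul]
  gcongr

lemma expAvg_mul_expAvg (a b : ℝ) :
    expAvg a * expAvg b = ∫ u in (0:ℝ)..1, ∫ v in (0:ℝ)..1, exp (a * u + b * v) := by
  simp only [exp_add, integral_const_mul, integral_mul_const, expAvg]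

lemma two_mul_expAvg_mul_expAvg (a b : ℝ) :
    2 * (expAvg a * expAvg b) =
      ∫ u in (0:ℝ)..1, ∫ v in (0:ℝ)..1, (exp (a * u + b * v) + exp (b * u + a * v)) := by
  have hcont : ∀ s t u : ℝ, Continuous fun v => exp (s * u + t * v) := fun s t u => by fun_prop
  have hcont' : ∀ s t : ℝ, Continuous fun u => ∫ v in (0:ℝ)..1, exp (s * u + t * v) :=
    fun s t => by fun_prop
  simp only [integral_add ((hcont _ _ _).intervalIntegrable _ _) ((hcont _ _ _).intervalIntegrable _ _)]
  rw [integral_add ((hcont' _ _).intervalIntegrable _ _) ((hcont' _ _).intervalIntegrable _ _),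
    ← expAvg_mul_expAvg, ← expAvg_mul_expAvg, mul_comm (expAvg b), two_mul]

lemma integral_integral_mono {F G : ℝ → ℝ → ℝ} (hF : Continuous (Function.uncurry F))
    (hG : Continuous (Function.uncurry G)) (hFG : ∀ u v, F u v ≤ G u v) :
    ∫ u in (0:ℝ)..1, ∫ v in (0:ℝ)..1, F u v ≤ ∫ u in (0:ℝ)..1, ∫ v in (0:ℝ)..1, G u v := by
  refine integral_mono_on zero_le_one ?_ ?_ fun u _ => ?_
  · exact (continuous_parametric_intervalIntegral_of_continuous' hF 0 1).intervalIntegrable _ _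
  · exact (continuous_parametric_intervalIntegral_of_continuous' hG 0 1).intervalIntegrable _ _
  · exact integral_mono_on zero_le_one (hF.uncurry_left u |>.intervalIntegrable _ _)
      (hG.uncurry_left u |>.intervalIntegrable _ _) fun v _ => hFG u v

lemma expAvg_mul_expAvg_le {a b c d : ℝ} (hsum : a + b = c + d) (habs : |a - b| ≤ |c - d|) :
    expAvg a * expAvg b ≤ expAvg c * expAvg d := by
  have h := integral_integral_mono (by fun_prop) (by fun_prop)
    (exp_add_exp_le_of_abs_sub_le hsum habs)
  rw [← two_mul_expAvg_mul_expAvg, ← two_mul_expAvg_mul_expAvg] at h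
  linarith

theorem stmt_1 (p r : ℝ) (hp : 1 ≤ p) (hr : 0 ≤ r) (x : ℝ) (hx : 0 < x) :
    (p + r) * (x ^ p - 1) * (x ^ (1 + r) - 1) ≤
      p * (1 + r) * (x - 1) * (x ^ (p + r) - 1) := by
  set l := log x
  have hrpow (t : ℝ) : x ^ t - 1 = l * t * expAvg (l * t) := by
    rw [rpow_def_of_pos hx, exp_sub_one_eq_mul_expAvg]
  have hx1 : x - 1 = l * 1 * expAvg (l * 1) := by rw [← hrpow, rpow_one]
  have hle : expAvg (l * p) * expAvg (l * (1 + r)) ≤ expAvg (l * 1) * expAvg (l * (p + r)) := by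
    refine expAvg_mul_expAvg_le (by ring) ?_
    rw [← mul_sub, ← mul_sub, abs_mul, abs_mul]
    refine mul_le_mul_of_nonneg_left ?_ (abs_nonneg l)
    rw [abs_le, abs_of_nonpos (by linarith)]
    constructor <;> linarith
  have hcoef : 0 ≤ p * (1 + r) * (p + r) * l ^ 2 := by
    have : 0 ≤ p := by linarith
    positivity
  rw [hrpow, hrpow, hrpow, hx1]
  calc _ = p * (1 + r) * (p + r) * l ^ 2 * (expAvg (l * p) * expAvg (l * (1 + r))) := by ring
    _ ≤ p * (1 + r) * (p + r) * l ^ 2 * (expAvg (l * 1) * expAvg (l * (p + r))) := by gcongr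
    _ = _ := by ring
end

section
/- Let p₁, p₂, q₁, q₂ be real numbers with 0 < p₁ ≤ p₂, 0 < q₁ ≤ q₂, p₁ + p₂ = q₁ + q₂ and p₂ ≤ q₂. Then for every real x with 0 < x, one has q₁·q₂·(x^{p₁} - 1)·(x^{p₂} - 1) ≤ p₁·p₂·(x^{q₁} - 1)·(x^{q₂} - 1). -/
/-!
Write `p₁, p₂ = m ∓ e` and `q₁, q₂ = m ∓ d`, so that `0 ≤ e ≤ d ≤ m`. With `a = log x`,
`(x ^ (m - t) - 1) * (x ^ (m + t) - 1) = 2 * x ^ m * (cosh (a * m) - cosh (a * t))`, and the claim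
becomes a three-point convexity inequality at `e ^ 2 ≤ d ^ 2 ≤ m ^ 2` for `u ↦ cosh (a * √u)`,
which is convex on `[0, ∞)` because its Taylor series `∑ a ^ (2 * n) * u ^ n / (2 * n)!` has
nonnegative coefficients.
-/

open Real Set Nat

lemma ConvexOn.sub_mul_le_sub_mul_add_sub_mul {s : Set ℝ} {f : ℝ → ℝ} (hf : ConvexOn ℝ s f)
    {x y z : ℝ} (hx : x ∈ s) (hz : z ∈ s) (hxy : x ≤ y) (hyz : y ≤ z) :
    (z - x) * f y ≤ (z - y) * f x + (y - x) * f z := by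
  rcases hxy.eq_or_lt with rfl | hxy
  · simp
  rcases hyz.eq_or_lt with rfl | hyz
  · simp
  exact hf.secant_mono_aux1 hx hz hxy hyz

lemma convexOn_Ici_of_hasSum_pow {c : ℕ → ℝ} (hc : ∀ n, 0 ≤ c n) {f : ℝ → ℝ}
    (hf : ∀ u, 0 ≤ u → HasSum (fun n ↦ c n * u ^ n) (f u)) : ConvexOn ℝ (Ici 0) f := by
  refine ⟨convex_Ici 0, fun u hu v hv α β hα hβ hαβ ↦ ?_⟩
  have huv : 0 ≤ α • u + β • v := (convex_Ici 0) hu hv hα hβ hαβ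
  refine hasSum_le (fun n ↦ ?_) (hf _ huv) (((hf u hu).mul_left α).add ((hf v hv).mul_left β))
  have := (convexOn_pow n).2 hu hv hα hβ hαβ
  simp only [smul_eq_mul] at this ⊢
  nlinarith [hc n]

lemma convexOn_cosh_mul_sqrt (a : ℝ) : ConvexOn ℝ (Ici 0) fun u ↦ cosh (a * √u) := by
  refine convexOn_Ici_of_hasSum_pow (c := fun n ↦ (a ^ 2) ^ n / (2 * n)!) (fun n ↦ by positivity)
    fun u hu ↦ ?_
  convert hasSum_cosh (a * √u) using 2 with n
  rw [pow_mul, mul_pow, sq_sqrt hu, mul_pow]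
  ring

lemma rpow_sub_one_mul_rpow_sub_one {x : ℝ} (hx : 0 < x) (s t : ℝ) :
    (x ^ (s - t) - 1) * (x ^ (s + t) - 1) = 2 * x ^ s * (cosh (log x * s) - cosh (log x * t)) := by
  simp only [rpow_def_of_pos hx, cosh_eq, mul_sub, mul_add, exp_sub, exp_add, exp_neg]
  field_simp
  ring

lemma weighted_rpow_sub_one_mul_rpow_sub_one_le {x m d e : ℝ} (hx : 0 < x) (he : 0 ≤ e)
    (hed : e ≤ d) (hdm : d ≤ m) :
    (m - d) * (m + d) * (x ^ (m - e) - 1) * (x ^ (m + e) - 1) ≤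
      (m - e) * (m + e) * (x ^ (m - d) - 1) * (x ^ (m + d) - 1) := by
  set g := fun t ↦ cosh (log x * t)
  have hconv : (m ^ 2 - e ^ 2) * g d ≤ (m ^ 2 - d ^ 2) * g e + (d ^ 2 - e ^ 2) * g m := by
    have hd := he.trans hed
    have := (convexOn_cosh_mul_sqrt (log x)).sub_mul_le_sub_mul_add_sub_mul (sq_nonneg e)
      (sq_nonneg m) (pow_le_pow_left₀ he hed 2) (pow_le_pow_left₀ hd hdm 2)
    rwa [sqrt_sq he, sqrt_sq hd, sqrt_sq (hd.trans hdm)] at this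
  rw [mul_assoc, mul_assoc ((m - e) * (m + e)), rpow_sub_one_mul_rpow_sub_one hx,
    rpow_sub_one_mul_rpow_sub_one hx]
  linarith [mul_le_mul_of_nonneg_left hconv (rpow_pos_of_pos hx m).le]

theorem stmt_2_general (p₁ p₂ q₁ q₂ : ℝ) (hp : p₁ ≤ p₂) (hq₁ : 0 < q₁)
    (hsum : p₁ + p₂ = q₁ + q₂) (hpq : p₂ ≤ q₂) (x : ℝ) (hx : 0 < x) :
    q₁ * q₂ * (x ^ p₁ - 1) * (x ^ p₂ - 1) ≤ p₁ * p₂ * (x ^ q₁ - 1) * (x ^ q₂ - 1) := by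
  obtain ⟨m, d, e, rfl, rfl, rfl, rfl⟩ :
      ∃ m d e : ℝ, p₁ = m - e ∧ p₂ = m + e ∧ q₁ = m - d ∧ q₂ = m + d :=
    ⟨(q₁ + q₂) / 2, (q₂ - q₁) / 2, (p₂ - p₁) / 2, by linarith, by linarith, by ring, by ring⟩
  exact weighted_rpow_sub_one_mul_rpow_sub_one_le hx (by linarith) (by linarith) (by linarith)

theorem stmt_2 (p₁ p₂ q₁ q₂ : ℝ) (hp₁ : 0 < p₁) (hp : p₁ ≤ p₂) (hq₁ : 0 < q₁)
    (hq : q₁ ≤ q₂) (hsum : p₁ + p₂ = q₁ + q₂) (hpq : p₂ ≤ q₂) (x : ℝ) (hx : 0 < x) :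
    q₁ * q₂ * (x ^ p₁ - 1) * (x ^ p₂ - 1) ≤ p₁ * p₂ * (x ^ q₁ - 1) * (x ^ q₂ - 1) :=
  stmt_2_general p₁ p₂ q₁ q₂ hp hq₁ hsum hpq x hx
end

section
/- Let n be a natural number with n ≥ 1 and let p₁ ≤ p₂ ≤ … ≤ pₙ and q₁ ≤ q₂ ≤ … ≤ qₙ be positive real numbers such that ∑_{j=1}^n p_j = ∑_{j=1}^n q_j and, for every k with 2 ≤ k ≤ n, ∑_{j=k}^n p_j ≤ ∑_{j=k}^n q_j. Then for every real x with 1 < x, one has (∏_{j=1}^n q_j)·∏_{j=1}^n (x^{p_j} - 1) ≤ (∏_{j=1}^n p_j)·∏_{j=1}^n (x^{q_j} - 1). -/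
/-!
With `u = t log x`, the function `t ↦ log ((x ^ t - 1) / t)` is, up to an additive constant,
`u ↦ log ((exp u - 1) / u)`, which is convex on `(0, ∞)` because its second derivative
`1 / u ^ 2 - exp u / (exp u - 1) ^ 2` is nonnegative, i.e. `u * exp (u / 2) ≤ exp u - 1`, i.e.
`u / 2 ≤ sinh (u / 2)`. The tail-sum hypotheses say that `q` majorizes `p`, so Karamata's
inequality gives `∑ log ((x ^ p j - 1) / p j) ≤ ∑ log ((x ^ q j - 1) / q j)`; exponentiating
yields the claim. Karamata's inequality itself follows by Abel summation, writing
`f (q j) - f (p j) = c j * (q j - p j)` with secant slopes `c j` that are monotone in `j` by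
convexity.
-/

open Real Set

lemma mul_exp_half_le_exp_sub_one {u : ℝ} (hu : 0 ≤ u) : u * exp (u / 2) ≤ exp u - 1 := by
  have hsinh : u / 2 ≤ sinh (u / 2) := self_le_sinh_iff.mpr (by positivity)
  rw [sinh_eq] at hsinh
  have hsq : exp (u / 2) * exp (u / 2) = exp u := by rw [← exp_add]; ring_nf
  have hinv : exp (-(u / 2)) * exp (u / 2) = 1 := by rw [← exp_add]; simp
  nlinarith [exp_pos (u / 2)]

lemma sq_mul_exp_le_exp_sub_one_sq {u : ℝ} (hu : 0 ≤ u) :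
    u ^ 2 * exp u ≤ (exp u - 1) ^ 2 := by
  calc u ^ 2 * exp u = (u * exp (u / 2)) ^ 2 := by rw [mul_pow, ← exp_nat_mul]; ring_nf
    _ ≤ (exp u - 1) ^ 2 := pow_le_pow_left₀ (by positivity) (mul_exp_half_le_exp_sub_one hu) 2

lemma convexOn_log_exp_sub_one_div_self : ConvexOn ℝ (Ioi 0) fun u ↦ log ((exp u - 1) / u) := by
  have hpos {u : ℝ} (hu : 0 < u) : 0 < exp u - 1 := sub_pos.mpr (one_lt_exp_iff.mpr hu)
  have hf' {u : ℝ} (hu : 0 < u) : HasDerivAt (fun u ↦ log (exp u - 1) - log u)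
      (exp u / (exp u - 1) - u⁻¹) u :=
    (((hasDerivAt_exp u).sub_const 1).log (hpos hu).ne').sub (hasDerivAt_log hu.ne')
  have hf'' {u : ℝ} (hu : 0 < u) : HasDerivAt (fun u ↦ exp u / (exp u - 1) - u⁻¹)
      ((u ^ 2)⁻¹ - exp u / (exp u - 1) ^ 2) u := by
    refine (((hasDerivAt_exp u).div ((hasDerivAt_exp u).sub_const 1) (hpos hu).ne').sub
      (hasDerivAt_inv hu.ne')).congr_deriv ?_
    have := (hpos hu).ne'
    field_simp
    ring
  have hconv : ConvexOn ℝ (Ioi 0) fun u ↦ log (exp u - 1) - log u := by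
    refine convexOn_of_hasDerivWithinAt2_nonneg (convex_Ioi 0)
      (fun u hu ↦ (hf' hu).continuousAt.continuousWithinAt)
      (fun u hu ↦ (hf' (interior_subset hu)).hasDerivWithinAt)
      (fun u hu ↦ (hf'' (interior_subset hu)).hasDerivWithinAt) fun u hu ↦ ?_
    have hu : 0 < u := interior_subset hu
    rw [sub_nonneg, div_le_iff₀ (pow_pos (hpos hu) 2), inv_mul_eq_div,
      le_div_iff₀ (pow_pos hu 2), mul_comm]
    exact sq_mul_exp_le_exp_sub_one_sq hu.le
  exact hconv.congr fun u hu ↦ (log_div (hpos hu).ne' (ne_of_gt hu)).symm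

lemma convexOn_log_rpow_sub_one_div_self {x : ℝ} (hx : 1 < x) :
    ConvexOn ℝ (Ioi 0) fun t ↦ log ((x ^ t - 1) / t) := by
  have hc : 0 < log x := log_pos hx
  have hpre : LinearMap.mulLeft ℝ (log x) ⁻¹' Ioi 0 = Ioi 0 := by
    ext t; simp [mul_pos_iff_of_pos_left hc]
  have h := (convexOn_log_exp_sub_one_div_self.comp_linearMap
    (LinearMap.mulLeft ℝ (log x))).add_const (log (log x))
  rw [hpre] at h
  refine h.congr fun t (ht : 0 < t) ↦ ?_
  have hpos : 0 < exp (log x * t) - 1 := sub_pos.mpr (one_lt_exp_iff.mpr (by positivity))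
  simp only [Pi.add_apply, Function.comp_apply, LinearMap.mulLeft_apply]
  rw [← log_mul (by positivity) hc.ne', rpow_def_of_pos (by linarith)]
  congr 1
  field_simp

/-- Using the right derivative on the diagonal makes `secantSlope f` monotone in each argument
when `f` is convex. -/
noncomputable def secantSlope (f : ℝ → ℝ) (a b : ℝ) : ℝ :=
  if a = b then derivWithin f (Ioi a) a else slope f a b

lemma secantSlope_comm (f : ℝ → ℝ) (a b : ℝ) : secantSlope f a b = secantSlope f b a := by
  by_cases h : a = b
  · rw [h]
  · simp only [secantSlope, h, Ne.symm h, if_false, slope_comm]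

lemma secantSlope_mul_sub (f : ℝ → ℝ) (a b : ℝ) :
    secantSlope f a b * (b - a) = f b - f a := by
  by_cases h : a = b
  · simp [h]
  · rw [secantSlope, if_neg h, slope_def_field, div_mul_cancel₀ _ (sub_ne_zero.mpr (Ne.symm h))]

namespace ConvexOn

variable {S : Set ℝ} {f : ℝ → ℝ}

lemma secantSlope_mono_right (hf : ConvexOn ℝ S f) {a b b' : ℝ} (ha : a ∈ interior S)
    (hb : b ∈ S) (hb' : b' ∈ S) (hbb' : b ≤ b') :
    secantSlope f a b ≤ secantSlope f a b' := by
  rcases hbb'.eq_or_lt with rfl | hlt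
  · rfl
  by_cases hab : a = b
  · subst hab
    rw [secantSlope, if_pos rfl, secantSlope, if_neg hlt.ne]
    exact hf.rightDeriv_le_slope_of_mem_interior ha hb' hlt
  by_cases hab' : a = b'
  · subst hab'
    rw [secantSlope, if_neg hab, secantSlope, if_pos rfl, slope_comm]
    exact (hf.slope_le_leftDeriv_of_mem_interior hb ha hlt).trans
      (hf.leftDeriv_le_rightDeriv_of_mem_interior ha)
  · rw [secantSlope, if_neg hab, secantSlope, if_neg hab']
    exact hf.slope_mono (interior_subset ha) ⟨hb, Ne.symm hab⟩ ⟨hb', Ne.symm hab'⟩ hbb'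

lemma secantSlope_mono (hf : ConvexOn ℝ S f) {a a' b b' : ℝ} (ha : a ∈ interior S)
    (ha' : a' ∈ interior S) (hb : b ∈ interior S) (hb' : b' ∈ interior S) (haa' : a ≤ a')
    (hbb' : b ≤ b') : secantSlope f a b ≤ secantSlope f a' b' :=
  calc secantSlope f a b ≤ secantSlope f a b' :=
        hf.secantSlope_mono_right ha (interior_subset hb) (interior_subset hb') hbb'
    _ = secantSlope f b' a := secantSlope_comm f a b'
    _ ≤ secantSlope f b' a' :=
        hf.secantSlope_mono_right hb' (interior_subset ha) (interior_subset ha') haa'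
    _ = secantSlope f a' b' := secantSlope_comm f b' a'

end ConvexOn

theorem sum_mul_nonneg_of_monotone_of_tail_nonneg {R : Type*} [CommRing R] [PartialOrder R]
    [IsOrderedRing R] {n : ℕ} {e d : Fin n → R} (he : Monotone e) (he0 : ∀ j, 0 ≤ e j)
    (hd : ∀ k, 0 ≤ ∑ j ∈ Finset.Ici k, d j) : 0 ≤ ∑ j, e j * d j := by
  induction n with
  | zero => simp
  | succ n ih =>
    have hshift (k : Fin n) :
        ∑ j ∈ Finset.Ici k, d j.succ = ∑ j ∈ Finset.Ici k.succ, d j := by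
      rw [← Fin.map_succEmb_Ici, Finset.sum_map]
      rfl
    have hrest : 0 ≤ ∑ j : Fin n, (e j.succ - e 0) * d j.succ :=
      ih (fun i j hij ↦ sub_le_sub_right (he (Fin.succ_le_succ_iff.mpr hij)) _)
        (fun j ↦ sub_nonneg.mpr (he (Fin.zero_le _))) fun k ↦ hshift k ▸ hd k.succ
    have htotal : 0 ≤ d 0 + ∑ j : Fin n, d j.succ := by
      simpa [Finset.Ici_bot, Fin.sum_univ_succ] using hd 0
    calc 0 ≤ e 0 * (d 0 + ∑ j : Fin n, d j.succ) + ∑ j : Fin n, (e j.succ - e 0) * d j.succ :=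
          add_nonneg (mul_nonneg (he0 0) htotal) hrest
      _ = ∑ j, e j * d j := by
          simp only [Fin.sum_univ_succ, sub_mul, Finset.sum_sub_distrib, mul_add, Finset.mul_sum]
          ring

theorem ConvexOn.sum_le_sum_of_tail_le {S : Set ℝ} {f : ℝ → ℝ} (hf : ConvexOn ℝ S f)
    {n : ℕ} {p q : Fin n → ℝ} (hp : Monotone p) (hq : Monotone q)
    (hpS : ∀ j, p j ∈ interior S) (hqS : ∀ j, q j ∈ interior S)
    (hsum : ∑ j, p j = ∑ j, q j)
    (htail : ∀ k, ∑ j ∈ Finset.Ici k, p j ≤ ∑ j ∈ Finset.Ici k, q j) :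
    ∑ j, f (p j) ≤ ∑ j, f (q j) := by
  cases n with
  | zero => simp
  | succ n =>
    set c : Fin (n + 1) → ℝ := fun j ↦ secantSlope f (p j) (q j)
    have hc : Monotone c := fun i j hij ↦
      hf.secantSlope_mono (hpS i) (hpS j) (hqS i) (hqS j) (hp hij) (hq hij)
    have key := sum_mul_nonneg_of_monotone_of_tail_nonneg (e := fun j ↦ c j - c 0)
      (d := fun j ↦ q j - p j) (fun i j hij ↦ sub_le_sub_right (hc hij) _)
      (fun j ↦ sub_nonneg.mpr (hc (Fin.zero_le j)))
      fun k ↦ by simpa only [Finset.sum_sub_distrib, sub_nonneg] using htail k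
    simp only [sub_mul, Finset.sum_sub_distrib, ← Finset.mul_sum, hsum, sub_self, mul_zero,
      sub_zero, c, secantSlope_mul_sub] at key
    linarith

theorem stmt_3_general (n : ℕ) (p q : Fin n → ℝ)
    (hpmono : Monotone p) (hqmono : Monotone q)
    (hppos : ∀ j, 0 < p j) (hqpos : ∀ j, 0 < q j)
    (hsum : ∑ j, p j = ∑ j, q j)
    (htail : ∀ k : Fin n, 1 ≤ (k : ℕ) →
      ∑ j ∈ Finset.Ici k, p j ≤ ∑ j ∈ Finset.Ici k, q j)
    (x : ℝ) (hx : 1 < x) :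
    (∏ j, q j) * ∏ j, (x ^ p j - 1) ≤ (∏ j, p j) * ∏ j, (x ^ q j - 1) := by
  have hpos {t : ℝ} (ht : 0 < t) : 0 < (x ^ t - 1) / t :=
    div_pos (sub_pos.mpr (one_lt_rpow hx ht)) ht
  have htail' (k : Fin n) : ∑ j ∈ Finset.Ici k, p j ≤ ∑ j ∈ Finset.Ici k, q j := by
    rcases Nat.eq_zero_or_pos k with hk | hk
    · have : Finset.Ici k = Finset.univ := by ext j; simp [Fin.le_def, hk]
      rw [this, hsum]
    · exact htail k hk
  have hlog := (convexOn_log_rpow_sub_one_div_self hx).sum_le_sum_of_tail_le hpmono hqmono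
    (by rwa [interior_Ioi]) (by rwa [interior_Ioi]) hsum htail'
  have hprod : ∏ j, (x ^ p j - 1) / p j ≤ ∏ j, (x ^ q j - 1) / q j := by
    rwa [← log_le_log_iff (Finset.prod_pos fun j _ ↦ hpos (hppos j))
      (Finset.prod_pos fun j _ ↦ hpos (hqpos j)), log_prod fun j _ ↦ (hpos (hppos j)).ne',
      log_prod fun j _ ↦ (hpos (hqpos j)).ne']
  rwa [Finset.prod_div_distrib, Finset.prod_div_distrib, div_le_div_iff₀
    (Finset.prod_pos fun j _ ↦ hppos j) (Finset.prod_pos fun j _ ↦ hqpos j), mul_comm,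
    mul_comm _ (∏ j, p j)] at hprod

theorem stmt_3 (n : ℕ) (hn : 1 ≤ n) (p q : Fin n → ℝ)
    (hpmono : Monotone p) (hqmono : Monotone q)
    (hppos : ∀ j, 0 < p j) (hqpos : ∀ j, 0 < q j)
    (hsum : ∑ j, p j = ∑ j, q j)
    (htail : ∀ k : Fin n, 1 ≤ (k : ℕ) →
      ∑ j ∈ Finset.Ici k, p j ≤ ∑ j ∈ Finset.Ici k, q j)
    (x : ℝ) (hx : 1 < x) :
    (∏ j, q j) * ∏ j, (x ^ p j - 1) ≤ (∏ j, p j) * ∏ j, (x ^ q j - 1) :=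
  stmt_3_general n p q hpmono hqmono hppos hqpos hsum htail x hx
end

section
/- Let n be an even natural number with n ≥ 1 and let p₁ ≤ p₂ ≤ … ≤ pₙ and q₁ ≤ q₂ ≤ … ≤ qₙ be positive real numbers such that ∑_{j=1}^n p_j = ∑_{j=1}^n q_j and, for every k with 2 ≤ k ≤ n, ∑_{j=k}^n p_j ≤ ∑_{j=k}^n q_j. Then for every real x with 0 < x < 1, one has (∏_{j=1}^n q_j)·∏_{j=1}^n (x^{p_j} - 1) ≤ (∏_{j=1}^n p_j)·∏_{j=1}^n (x^{q_j} - 1). -/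
/-!
For `0 < x < 1` the function `f t = log ((1 - x ^ t) / t)` is convex on `(0, ∞)`: up to an
additive constant it is `φ (-t log x)` with `φ t = log ((1 - e^{-t}) / t)`, and
`φ'' t = 1 / t ^ 2 - e^t / (e^t - 1) ^ 2 ≥ 0` because `t ≤ 2 sinh (t / 2)`.
Since `p` is nondecreasing, so is `f' ∘ p`, and Abel summation against the nonnegative tail sums
of `q - p` (whose total vanishes) gives `∑ f' (p j) (q j - p j) ≥ 0`; the tangent-line
inequality then yields `∑ f (p j) ≤ ∑ f (q j)`. Exponentiating gives
`∏ (1 - x ^ p j) / p j ≤ ∏ (1 - x ^ q j) / q j`, and as `n` is even the products of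
`x ^ t - 1` equal those of `1 - x ^ t`.
-/

open Real Finset

theorem Real.sq_mul_exp_le_sq_exp_sub_one (t : ℝ) : t ^ 2 * exp t ≤ (exp t - 1) ^ 2 := by
  have hsinh : (t / 2) ^ 2 ≤ sinh (t / 2) ^ 2 := by
    rw [sq_le_sq, abs_sinh]
    exact self_le_sinh_iff.2 (abs_nonneg _)
  have hexp : exp t - 1 = exp (t / 2) * (2 * sinh (t / 2)) := by
    rw [sinh_eq, mul_div_cancel₀ _ two_ne_zero, mul_sub, ← exp_add, ← exp_add,
      add_halves, add_neg_cancel, exp_zero]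
  have hexp_sq : exp t = exp (t / 2) ^ 2 := by rw [← exp_nat_mul]; ring_nf
  rw [hexp, hexp_sq]
  nlinarith [sq_nonneg (exp (t / 2))]

theorem Real.hasDerivAt_log_one_sub_exp_neg_sub_log {t : ℝ} (ht : 0 < t) :
    HasDerivAt (fun t => log (1 - exp (-t)) - log t) ((exp t - 1)⁻¹ - t⁻¹) t := by
  have hE : exp (-t) < 1 := exp_lt_one_iff.2 (neg_lt_zero.2 ht)
  have hE' : 1 < exp t := one_lt_exp_iff.2 ht
  refine ((((hasDerivAt_neg t).exp).const_sub 1).log (by linarith)).sub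
    (hasDerivAt_log ht.ne') |>.congr_deriv ?_
  rw [exp_neg]
  field_simp

theorem Real.hasDerivAt_inv_exp_sub_one_sub_inv {t : ℝ} (ht : t ≠ 0) :
    HasDerivAt (fun t => (exp t - 1)⁻¹ - t⁻¹) ((t ^ 2)⁻¹ - exp t / (exp t - 1) ^ 2) t := by
  have hE : exp t - 1 ≠ 0 := sub_ne_zero.2 (mt (exp_eq_one_iff t).1 ht)
  refine (((hasDerivAt_exp t).sub_const 1).inv hE).sub (hasDerivAt_inv ht) |>.congr_deriv ?_
  ring

theorem Real.convexOn_log_one_sub_exp_neg_sub_log :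
    ConvexOn ℝ (Set.Ioi 0) (fun t => log (1 - exp (-t)) - log t) := by
  refine convexOn_of_hasDerivWithinAt2_nonneg (f' := fun t => (exp t - 1)⁻¹ - t⁻¹)
    (f'' := fun t => (t ^ 2)⁻¹ - exp t / (exp t - 1) ^ 2) (convex_Ioi 0)
    (fun t ht => (hasDerivAt_log_one_sub_exp_neg_sub_log ht).continuousAt.continuousWithinAt)
    (fun t ht => ?_) (fun t ht => ?_) (fun t ht => ?_) <;> rw [interior_Ioi] at ht
  · exact (hasDerivAt_log_one_sub_exp_neg_sub_log ht).hasDerivWithinAt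
  · exact (hasDerivAt_inv_exp_sub_one_sub_inv ht.ne').hasDerivWithinAt
  · have hE : 0 < exp t - 1 := sub_pos.2 (one_lt_exp_iff.2 ht)
    rw [sub_nonneg, div_le_iff₀ (pow_pos hE 2), ← div_eq_inv_mul, le_div_iff₀ (pow_pos ht 2)]
    linarith [sq_mul_exp_le_sq_exp_sub_one t]

theorem ConvexOn.add_deriv_mul_sub_le {D : Set ℝ} {f : ℝ → ℝ} {x y : ℝ} (hf : ConvexOn ℝ D f)
    (hx : x ∈ D) (hy : y ∈ D) (hfx : DifferentiableAt ℝ f x) :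
    f x + deriv f x * (y - x) ≤ f y := by
  rcases lt_trichotomy x y with hxy | rfl | hxy
  · have := hf.deriv_le_slope hx hy hxy hfx
    rw [slope_def_field, le_div_iff₀ (sub_pos.2 hxy)] at this
    linarith
  · simp
  · have := hf.slope_le_deriv hy hx hxy hfx
    rw [slope_def_field, div_le_iff₀ (sub_pos.2 hxy)] at this
    linarith

theorem Finset.sum_mul_nonneg_of_tail_sum_nonneg {ι : Type*} [LinearOrder ι] {w d : ι → ℝ}
    (s : Finset ι) (hw : MonotoneOn w s) (hw₀ : ∀ i ∈ s, 0 ≤ w i)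
    (hd : ∀ k ∈ s, 0 ≤ ∑ j ∈ s with k ≤ j, d j) :
    0 ≤ ∑ j ∈ s, w j * d j := by
  induction s using Finset.induction_on_min generalizing w with
  | empty => simp
  | insert a s ha ih =>
    have ha' : a ∉ s := fun h => lt_irrefl a (ha a h)
    have hsplit : ∑ j ∈ insert a s, w j * d j
        = w a * ∑ j ∈ insert a s, d j + ∑ j ∈ s, (w j - w a) * d j := by
      simp only [sum_insert ha', mul_add, mul_sum, sub_mul, sum_sub_distrib]
      ring
    rw [hsplit]
    refine add_nonneg (mul_nonneg (hw₀ a (mem_insert_self a s)) ?_) (ih ?_ ?_ ?_)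
    · have := hd a (mem_insert_self a s)
      rwa [filter_true_of_mem fun j hj => ?_] at this
      rcases mem_insert.1 hj with rfl | hj
      exacts [le_rfl, (ha j hj).le]
    · exact fun i hi j hj hij =>
        sub_le_sub_right (hw (mem_insert_of_mem hi) (mem_insert_of_mem hj) hij) _
    · exact fun i hi =>
        sub_nonneg.2 (hw (mem_insert_self a s) (mem_insert_of_mem hi) (ha i hi).le)
    · intro k hk
      have := hd k (mem_insert_of_mem hk)
      rwa [filter_insert, if_neg (not_le.2 (ha k hk))] at this

theorem Finset.sum_mul_nonneg_of_tail_sum_nonneg_of_sum_eq_zero {ι : Type*} [LinearOrder ι]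
    {w d : ι → ℝ} (s : Finset ι) (hw : MonotoneOn w s)
    (hd : ∀ k ∈ s, 0 ≤ ∑ j ∈ s with k ≤ j, d j) (hd₀ : ∑ j ∈ s, d j = 0) :
    0 ≤ ∑ j ∈ s, w j * d j := by
  rcases s.eq_empty_or_nonempty with rfl | hs
  · simp
  have hshift : ∑ j ∈ s, w j * d j = ∑ j ∈ s, (w j - w (s.min' hs)) * d j := by
    simp only [sub_mul, sum_sub_distrib, ← mul_sum, hd₀, mul_zero, sub_zero]
  rw [hshift]
  exact s.sum_mul_nonneg_of_tail_sum_nonneg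
    (fun i hi j hj hij => sub_le_sub_right (hw hi hj hij) _)
    (fun i hi => sub_nonneg.2 (hw (min'_mem s hs) hi (min'_le s i hi))) hd

theorem ConvexOn.sum_le_sum_of_tail_sum_le {ι : Type*} [Fintype ι] [LinearOrder ι]
    [LocallyFiniteOrderTop ι] {D : Set ℝ} {f : ℝ → ℝ} (hf : ConvexOn ℝ D f)
    (hfd : ∀ x ∈ D, DifferentiableAt ℝ f x) {p q : ι → ℝ} (hpD : ∀ i, p i ∈ D)
    (hqD : ∀ i, q i ∈ D) (hp : Monotone p)
    (htail : ∀ k, ∑ j ∈ Ici k, p j ≤ ∑ j ∈ Ici k, q j) (hsum : ∑ j, p j = ∑ j, q j) :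
    ∑ j, f (p j) ≤ ∑ j, f (q j) := by
  have habel : 0 ≤ ∑ j, deriv f (p j) * (q j - p j) := by
    refine univ.sum_mul_nonneg_of_tail_sum_nonneg_of_sum_eq_zero
      (fun i _ j _ hij => hf.monotoneOn_deriv hfd (hpD i) (hpD j) (hp hij)) (fun k _ => ?_)
      (by rw [sum_sub_distrib, hsum, sub_self])
    rw [filter_le_eq_Ici, sum_sub_distrib, sub_nonneg]
    exact htail k
  calc ∑ j, f (p j) ≤ ∑ j, f (p j) + ∑ j, deriv f (p j) * (q j - p j) :=
        le_add_of_nonneg_right habel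
    _ = ∑ j, (f (p j) + deriv f (p j) * (q j - p j)) := sum_add_distrib.symm
    _ ≤ ∑ j, f (q j) :=
        sum_le_sum fun j _ => hf.add_deriv_mul_sub_le (hpD j) (hqD j) (hfd _ (hpD j))

theorem Real.log_one_sub_exp_neg_mul_sub_log_mul {x t : ℝ} (hx₀ : 0 < x) (hx₁ : x < 1)
    (ht : 0 < t) :
    log (1 - exp (-(-log x * t))) - log (-log x * t) = log ((1 - x ^ t) / t) - log (-log x) := by
  have hxt : 0 < 1 - x ^ t := sub_pos.2 (rpow_lt_one hx₀.le hx₁ ht)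
  rw [log_mul (neg_pos.2 (log_neg hx₀ hx₁)).ne' ht.ne', neg_mul, neg_neg, ← rpow_def_of_pos hx₀,
    log_div hxt.ne' ht.ne']
  ring

theorem Finset.prod_le_prod_of_sum_log_le {ι : Type*} {s : Finset ι} {a b : ι → ℝ}
    (ha : ∀ i ∈ s, 0 < a i) (hb : ∀ i ∈ s, 0 < b i)
    (h : ∑ i ∈ s, log (a i) ≤ ∑ i ∈ s, log (b i)) : ∏ i ∈ s, a i ≤ ∏ i ∈ s, b i := by
  rwa [← log_prod fun i hi => (ha i hi).ne', ← log_prod fun i hi => (hb i hi).ne',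
    log_le_log_iff (prod_pos ha) (prod_pos hb)] at h

theorem Finset.prod_sub_comm_of_even_card {ι R : Type*} [CommRing R] {s : Finset ι}
    (hs : Even #s) (f g : ι → R) : ∏ i ∈ s, (f i - g i) = ∏ i ∈ s, (g i - f i) := by
  calc ∏ i ∈ s, (f i - g i) = ∏ i ∈ s, -(g i - f i) := by simp only [neg_sub]
    _ = ∏ i ∈ s, (g i - f i) := by rw [prod_neg, hs.neg_one_pow, one_mul]

theorem prod_one_sub_rpow_div_le_of_tail_sum_le {ι : Type*} [Fintype ι] [LinearOrder ι]
    [LocallyFiniteOrderTop ι] {p q : ι → ℝ} (hp : Monotone p) (hp₀ : ∀ j, 0 < p j)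
    (hq₀ : ∀ j, 0 < q j) (htail : ∀ k, ∑ j ∈ Ici k, p j ≤ ∑ j ∈ Ici k, q j)
    (hsum : ∑ j, p j = ∑ j, q j) {x : ℝ} (hx₀ : 0 < x) (hx₁ : x < 1) :
    ∏ j, (1 - x ^ p j) / p j ≤ ∏ j, (1 - x ^ q j) / q j := by
  have hu : 0 < -log x := neg_pos.2 (log_neg hx₀ hx₁)
  have hconvex := convexOn_log_one_sub_exp_neg_sub_log.sum_le_sum_of_tail_sum_le
    (fun t ht => (hasDerivAt_log_one_sub_exp_neg_sub_log ht).differentiableAt)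
    (p := fun j => -log x * p j) (q := fun j => -log x * q j)
    (fun j => mul_pos hu (hp₀ j)) (fun j => mul_pos hu (hq₀ j)) (hp.const_mul hu.le)
    (fun k => by simpa only [← mul_sum] using mul_le_mul_of_nonneg_left (htail k) hu.le)
    (by simp only [← mul_sum, hsum])
  simp only [log_one_sub_exp_neg_mul_sub_log_mul hx₀ hx₁ (hp₀ _),
    log_one_sub_exp_neg_mul_sub_log_mul hx₀ hx₁ (hq₀ _), sum_sub_distrib,
    sub_le_sub_iff_right] at hconvex
  have hpos : ∀ t : ℝ, 0 < t → 0 < (1 - x ^ t) / t := fun t ht =>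
    div_pos (sub_pos.2 (rpow_lt_one hx₀.le hx₁ ht)) ht
  exact prod_le_prod_of_sum_log_le (fun j _ => hpos _ (hp₀ j)) (fun j _ => hpos _ (hq₀ j))
    hconvex

theorem stmt_4_general (n : ℕ) (heven : Even n) (p q : Fin n → ℝ)
    (hpmono : Monotone p)
    (hppos : ∀ j, 0 < p j) (hqpos : ∀ j, 0 < q j)
    (hsum : ∑ j, p j = ∑ j, q j)
    (htail : ∀ k : Fin n, 1 ≤ (k : ℕ) →
      ∑ j ∈ Finset.Ici k, p j ≤ ∑ j ∈ Finset.Ici k, q j)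
    (x : ℝ) (hx0 : 0 < x) (hx1 : x < 1) :
    (∏ j, q j) * ∏ j, (x ^ p j - 1) ≤ (∏ j, p j) * ∏ j, (x ^ q j - 1) := by
  have htail' : ∀ k, ∑ j ∈ Ici k, p j ≤ ∑ j ∈ Ici k, q j := by
    intro k
    rcases Nat.eq_zero_or_pos k with hk | hk
    · have hIci : Ici k = univ := by ext j; simp [Fin.le_def, hk]
      rw [hIci, hsum]
    · exact htail k hk
  have hprod := prod_one_sub_rpow_div_le_of_tail_sum_le hpmono hppos hqpos htail' hsum hx0 hx1
  rw [prod_div_distrib, prod_div_distrib,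
    div_le_div_iff₀ (prod_pos fun j _ => hppos j) (prod_pos fun j _ => hqpos j)] at hprod
  have hcard : Even #(univ : Finset (Fin n)) := by simpa using heven
  have hflip : ∀ r : Fin n → ℝ, ∏ j, (x ^ r j - 1) = ∏ j, (1 - x ^ r j) := fun r =>
    prod_sub_comm_of_even_card hcard _ _
  rw [hflip p, hflip q]
  linarith

theorem stmt_4 (n : ℕ) (hn : 1 ≤ n) (heven : Even n) (p q : Fin n → ℝ)
    (hpmono : Monotone p) (hqmono : Monotone q)
    (hppos : ∀ j, 0 < p j) (hqpos : ∀ j, 0 < q j)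
    (hsum : ∑ j, p j = ∑ j, q j)
    (htail : ∀ k : Fin n, 1 ≤ (k : ℕ) →
      ∑ j ∈ Finset.Ici k, p j ≤ ∑ j ∈ Finset.Ici k, q j)
    (x : ℝ) (hx0 : 0 < x) (hx1 : x < 1) :
    (∏ j, q j) * ∏ j, (x ^ p j - 1) ≤ (∏ j, p j) * ∏ j, (x ^ q j - 1) :=
  stmt_4_general n heven p q hpmono hppos hqpos hsum htail x hx0 hx1
end

section
/- For every real x with 1 < x, one has 48·(x^2 - 1)·(x^3 - 1)·(x^5 - 1)·(x^7 - 1)·(x^11 - 1) ≤ 385·(x - 1)^2·(x^4 - 1)^2·(x^18 - 1). -/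
/-!
Writing `x ^ n - 1 = (x - 1) * (1 + x + ⋯ + x ^ (n - 1))`, both sides carry the factor
`(x - 1) ^ 5`, and the remaining products of geometric sums agree at `x = 1`
(`48 * 2 * 3 * 5 * 7 * 11 = 385 * 4 ^ 2 * 18`). The difference of the two sides turns out to be
`(x - 1) ^ 7` times a palindromic polynomial of degree 21 with positive coefficients.
-/

def gapQuotient (x : ℝ) : ℝ :=
  337 + 1589 * x + 4479 * x ^ 2 + 9827 * x ^ 3 + 17780 * x ^ 4 + 27860 * x ^ 5 + 39060 * x ^ 6 +
    49988 * x ^ 7 + 59396 * x ^ 8 + 66276 * x ^ 9 + 69908 * x ^ 10 + 69908 * x ^ 11 +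
    66276 * x ^ 12 + 59396 * x ^ 13 + 49988 * x ^ 14 + 39060 * x ^ 15 + 27860 * x ^ 16 +
    17780 * x ^ 17 + 9827 * x ^ 18 + 4479 * x ^ 19 + 1589 * x ^ 20 + 337 * x ^ 21

lemma gapQuotient_nonneg {x : ℝ} (hx : 0 ≤ x) : 0 ≤ gapQuotient x := by
  unfold gapQuotient
  positivity

lemma gap_eq_sub_one_pow_seven_mul_gapQuotient (x : ℝ) :
    385 * (x - 1) ^ 2 * (x ^ 4 - 1) ^ 2 * (x ^ 18 - 1) -
        48 * (x ^ 2 - 1) * (x ^ 3 - 1) * (x ^ 5 - 1) * (x ^ 7 - 1) * (x ^ 11 - 1) =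
      (x - 1) ^ 7 * gapQuotient x := by
  unfold gapQuotient
  ring

theorem stmt_7 (x : ℝ) (hx : 1 < x) :
    48 * (x ^ 2 - 1) * (x ^ 3 - 1) * (x ^ 5 - 1) * (x ^ 7 - 1) * (x ^ 11 - 1) ≤
      385 * (x - 1) ^ 2 * (x ^ 4 - 1) ^ 2 * (x ^ 18 - 1) := by
  rw [← sub_nonneg, gap_eq_sub_one_pow_seven_mul_gapQuotient]
  exact mul_nonneg (pow_nonneg (by linarith) 7) (gapQuotient_nonneg (by linarith))
end

section
/- For every real x with 1 < x, one has 5·6·(x^2 - 1)·(x^3 - 1)·(x^7 - 1) ≤ 2·3·7·(x - 1)·(x^5 - 1)·(x^6 - 1). -/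
theorem stmt_13 (x : ℝ) (hx : 1 < x) :
    5 * 6 * (x ^ 2 - 1) * (x ^ 3 - 1) * (x ^ 7 - 1) ≤
      2 * 3 * 7 * (x - 1) * (x ^ 5 - 1) * (x ^ 6 - 1) := by
  have hx0 : 0 < x := by linarith
  -- A zero of order 7 at x = 1 times a palindromic polynomial with positive coefficients.
  have factor : 2 * 3 * 7 * (x - 1) * (x ^ 5 - 1) * (x ^ 6 - 1)
      - 5 * 6 * (x ^ 2 - 1) * (x ^ 3 - 1) * (x ^ 7 - 1)
      = (x - 1) ^ 7 * (12 * x ^ 5 + 42 * x ^ 4 + 72 * x ^ 3 + 72 * x ^ 2 + 42 * x + 12) := by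
    ring
  have difference_nonneg :
      0 ≤ (x - 1) ^ 7 * (12 * x ^ 5 + 42 * x ^ 4 + 72 * x ^ 3 + 72 * x ^ 2 + 42 * x + 12) :=
    mul_nonneg (pow_nonneg (sub_nonneg.2 hx.le) 7) (by positivity)
  linarith
end
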